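/- arXiv:2601.12371 — 5 statements merged into one kernel-verified Lean document; each statement's English description precedes it below -/
import Mathlib

section
/- Let A be a skew left brace, S a sub-skew brace of A and I an ideal of A. Then S ∘ I = S + I as sets, and this set is a sub-skew brace of A. -/
/-- A skew left brace: a set with two group structures `(A, +)` and `(A, ∘)`
(here `∘` is `circ`, with inverse `sinv`) satisfying
`a ∘ (b + c) = (a ∘ b) - a + (a ∘ c)`. -/
class SkewBrace (A : Type*) extends AddGroup A where
  circ : A → A → A
  circ_assoc : ∀ a b c : A, circ (circ a b) c = circ a (circ b c)
  zero_circ : ∀ a : A, circ 0 a = a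
  circ_zero : ∀ a : A, circ a 0 = a
  sinv : A → A
  circ_sinv : ∀ a : A, circ a (sinv a) = 0
  sinv_circ : ∀ a : A, circ (sinv a) a = 0
  compat : ∀ a b c : A, circ a (b + c) = circ a b + -a + circ a c

namespace SkewBrace

variable {A : Type*} [SkewBrace A]

/-- The lambda map `λ_a(b) = -a + (a ∘ b)`. -/
def lam (a b : A) : A := -a + circ a b

/-- `S` is (the carrier of) a sub-skew brace: a subgroup of both `(A,+)` and `(A,∘)`. -/
def IsSub (S : Set A) : Prop :=
  (0 : A) ∈ S ∧ (∀ a ∈ S, ∀ b ∈ S, a + b ∈ S) ∧ (∀ a ∈ S, -a ∈ S) ∧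
    (∀ a ∈ S, ∀ b ∈ S, circ a b ∈ S) ∧ (∀ a ∈ S, sinv a ∈ S)

/-- `S` is (the carrier of) an ideal: a sub-skew brace normal in both group
structures and invariant under all `λ_a`. -/
def IsIdeal (S : Set A) : Prop :=
  IsSub S ∧ (∀ a : A, ∀ x ∈ S, -a + x + a ∈ S) ∧
    (∀ a : A, ∀ x ∈ S, circ (sinv a) (circ x a) ∈ S) ∧
    (∀ a : A, ∀ x ∈ S, lam a x ∈ S)

/-- A skew brace homomorphism: preserves both operations. -/
def IsHom {B : Type*} [SkewBrace B] (f : A → B) : Prop :=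
  (∀ x y : A, f (x + y) = f x + f y) ∧ ∀ x y : A, f (circ x y) = circ (f x) (f y)

/-- Multiplication of the semidirect product group `Λ_A = (A,+) ⋊_λ (A,∘)`. -/
def lmul (p q : A × A) : A × A := (p.1 + lam p.2 q.1, circ p.2 q.2)

end SkewBrace


namespace SkewBrace

variable {A : Type*} [SkewBrace A]

lemma sinv_unique' {a b : A} (h : circ a b = 0) : b = sinv a := by
  have := congrArg (circ (sinv a)) h
  rwa [← circ_assoc, sinv_circ, zero_circ, circ_zero] at this

lemma sinv_sinv' (a : A) : sinv (sinv a) = a :=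
  (sinv_unique' (sinv_circ a)).symm

lemma sinv_circ_rev (a b : A) : sinv (circ a b) = circ (sinv b) (sinv a) := by
  refine (sinv_unique' ?_).symm
  rw [circ_assoc, ← circ_assoc b, circ_sinv, zero_circ, circ_sinv]

lemma circ_eq_add_lam (a b : A) : circ a b = a + lam a b := by
  simp [lam]

lemma circ_neg' (a b : A) : circ a (-b) = -(circ a b + -a) + a := by
  have h := compat a b (-b)
  rw [add_neg_cancel, circ_zero] at h
  calc circ a (-b)
      = -(circ a b + -a) + (circ a b + -a + circ a (-b)) := by
        rw [← add_assoc, neg_add_cancel, zero_add]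
    _ = -(circ a b + -a) + a := by rw [← h]

lemma lam_comp (a b x : A) : lam a (lam b x) = lam (circ a b) x := by
  unfold lam
  rw [compat, circ_neg', ← circ_assoc]
  simp [add_assoc]

lemma lam_lam_sinv (a x : A) : lam a (lam (sinv a) x) = x := by
  rw [lam_comp, circ_sinv]
  simp [lam, zero_circ]

end SkewBrace

open SkewBrace
/-- for a sub-skew brace `S` and an ideal `I`, `S ∘ I = S + I`
as sets, and this set is a sub-skew brace. -/
theorem stmt_2 {A : Type*} [SkewBrace A] {S I : Set A}
    (hS : IsSub S) (hI : IsIdeal I) :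
    {z : A | ∃ s ∈ S, ∃ x ∈ I, z = SkewBrace.circ s x} =
      {z : A | ∃ s ∈ S, ∃ x ∈ I, z = s + x} ∧
    IsSub {z : A | ∃ s ∈ S, ∃ x ∈ I, z = s + x} := by
  have key : {z : A | ∃ s ∈ S, ∃ x ∈ I, z = SkewBrace.circ s x} =
      {z : A | ∃ s ∈ S, ∃ x ∈ I, z = s + x} := by
    ext z
    constructor
    · rintro ⟨s, hs, x, hx, rfl⟩
      exact ⟨s, hs, lam s x, hI.2.2.2 s x hx, circ_eq_add_lam s x⟩
    · rintro ⟨s, hs, x, hx, rfl⟩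
      refine ⟨s, hs, lam (sinv s) x, hI.2.2.2 _ x hx, ?_⟩
      rw [circ_eq_add_lam, lam_lam_sinv]
  refine ⟨key, ?_⟩
  obtain ⟨⟨hS0, hSadd, hSneg, hScirc, hSsinv⟩⟩ := And.intro hS trivial
  obtain ⟨⟨hI0, hIadd, hIneg, hIcirc, hIsinv⟩, hInorm, hIconj, hIlam⟩ := hI
  refine ⟨⟨0, hS0, 0, hI0, by simp⟩, ?_, ?_, ?_, ?_⟩
  · rintro _ ⟨s, hs, x, hx, rfl⟩ _ ⟨t, ht, y, hy, rfl⟩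
    refine ⟨s + t, hSadd s hs t ht, (-t + x + t) + y, hIadd _ (hInorm t x hx) y hy, ?_⟩
    simp [add_assoc]
  · rintro _ ⟨s, hs, x, hx, rfl⟩
    refine ⟨-s, hSneg s hs, s + -x + -s, ?_, ?_⟩
    · have := hInorm (-s) (-x) (hIneg x hx)
      simpa using this
    · simp [add_assoc]
  · rw [← key]
    rintro _ ⟨s, hs, x, hx, rfl⟩ _ ⟨t, ht, y, hy, rfl⟩
    refine ⟨circ s t, hScirc s hs t ht,
      circ (circ (sinv t) (circ x t)) y, hIcirc _ (hIconj t x hx) y hy, ?_⟩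
    simp only [circ_assoc]
    rw [← circ_assoc t, circ_sinv, zero_circ]
  · rw [← key]
    rintro _ ⟨s, hs, x, hx, rfl⟩
    refine ⟨sinv s, hSsinv s hs, circ s (circ (sinv x) (sinv s)), ?_, ?_⟩
    · have := hIconj (sinv s) (sinv x) (hIsinv x hx)
      rwa [sinv_sinv'] at this
    · rw [sinv_circ_rev, ← circ_assoc, sinv_circ, zero_circ]
end

section
/- Let A be a skew left brace, B a sub-skew brace of A and C an ideal of A with A = B + C. Then also A = C + B = B ∘ C = C ∘ B. -/
open SkewBrace

section Aux

variable {A : Type*} [SkewBrace A]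

lemma aux_circ_eq (a b : A) : circ a b = a + lam a b := by
  simp [lam]

lemma aux_sinv_sinv (a : A) : sinv (sinv a) = a := by
  have h1 : circ (sinv (sinv a)) (circ (sinv a) a) = sinv (sinv a) := by
    rw [sinv_circ, circ_zero]
  rw [← circ_assoc, sinv_circ, zero_circ] at h1
  exact h1.symm

lemma aux_lam_add (a b c : A) : lam a (b + c) = lam a b + lam a c := by
  simp [lam, compat, add_assoc]

lemma aux_lam_zero (a : A) : lam a 0 = 0 := by
  simp [lam, circ_zero]

lemma aux_lam_neg (a b : A) : lam a (-b) = - lam a b := by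
  have := aux_lam_add a b (-b)
  rw [add_neg_cancel, aux_lam_zero] at this
  exact (eq_neg_of_add_eq_zero_right this.symm)

lemma aux_lam_circ (a b c : A) : lam (circ a b) c = lam a (lam b c) := by
  have h1 : lam a (lam b c) = lam a (-b + circ b c) := rfl
  rw [h1, aux_lam_add, aux_lam_neg]
  simp only [lam, neg_add_rev, neg_neg]
  rw [circ_assoc, add_assoc, add_neg_cancel_left]

lemma aux_zero_lam (b : A) : lam 0 b = b := by
  simp [lam, zero_circ]

lemma aux_lam_lam_sinv (a c : A) : lam a (lam (sinv a) c) = c := by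
  rw [← aux_lam_circ, circ_sinv, aux_zero_lam]

end Aux

/-- if `A = B + C` with `B` a sub-skew brace and `C` an ideal,
then `A = C + B = B ∘ C = C ∘ B`. -/
theorem stmt_3 {A : Type*} [SkewBrace A] {B C : Set A}
    (hB : IsSub B) (hC : IsIdeal C)
    (h : ∀ a : A, ∃ b ∈ B, ∃ c ∈ C, a = b + c) :
    (∀ a : A, ∃ c ∈ C, ∃ b ∈ B, a = c + b) ∧
    (∀ a : A, ∃ b ∈ B, ∃ c ∈ C, a = SkewBrace.circ b c) ∧
    (∀ a : A, ∃ c ∈ C, ∃ b ∈ B, a = SkewBrace.circ c b) := by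
  obtain ⟨hCsub, hCaddn, hCcircn, hClam⟩ := hC
  refine ⟨?_, ?_, ?_⟩
  · intro a
    obtain ⟨b, hb, c, hc, rfl⟩ := h a
    refine ⟨b + c + -b, (by simpa using hCaddn (-b) c hc), b, hb, ?_⟩
    simp [add_assoc]
  · intro a
    obtain ⟨b, hb, c, hc, rfl⟩ := h a
    refine ⟨b, hb, lam (sinv b) c, hClam _ _ hc, ?_⟩
    rw [aux_circ_eq, aux_lam_lam_sinv]
  · intro a
    obtain ⟨b, hb, c, hc, rfl⟩ := h a
    set c₂ := lam (sinv b) c with hc₂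
    have h2 : b + c = circ b c₂ := by rw [aux_circ_eq, hc₂, aux_lam_lam_sinv]
    have hc₂C : c₂ ∈ C := hClam _ _ hc
    have hc₃ : circ (sinv (sinv b)) (circ c₂ (sinv b)) ∈ C := hCcircn (sinv b) c₂ hc₂C
    rw [aux_sinv_sinv] at hc₃
    refine ⟨_, hc₃, b, hb, ?_⟩
    rw [h2, circ_assoc, circ_assoc, sinv_circ, circ_zero]
end

section
/- Let 0 → I → E → H → 0 be an exact sequence of skew left braces (I an ideal of E with E/I ≅ H via π). Then the induced sequence of groups 0 → Λ_I → Λ_E → Λ_H → 0 is exact, where Λ_A = (A,+) ⋊_λ (A,∘). -/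
namespace SkewBrace
theorem hom_zero {A B : Type*} [SkewBrace A] [SkewBrace B] {f : A → B}
    (hf : IsHom f) : f 0 = 0 := by
  have := hf.1 0 0
  simp at this
  exact this

theorem hom_neg {A B : Type*} [SkewBrace A] [SkewBrace B] {f : A → B}
    (hf : IsHom f) (x : A) : f (-x) = -(f x) := by
  have h := hf.1 (-x) x
  rw [neg_add_cancel, hom_zero hf] at h
  exact eq_neg_of_add_eq_zero_left h.symm

theorem hom_lam {A B : Type*} [SkewBrace A] [SkewBrace B] {f : A → B}
    (hf : IsHom f) (a b : A) : f (lam a b) = lam (f a) (f b) := by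
  unfold lam
  rw [hf.1, hom_neg hf, hf.2]
end SkewBrace

open SkewBrace
/-- an exact sequence `0 → I → E → H → 0` of skew braces induces an
exact sequence of groups `0 → Λ_I → Λ_E → Λ_H → 0`. -/
theorem stmt_6 {I E H : Type*} [SkewBrace I] [SkewBrace E] [SkewBrace H]
    (ι : I → E) (π : E → H) (hι : IsHom ι) (hπ : IsHom π)
    (hinj : Function.Injective ι) (hsurj : Function.Surjective π)
    (hker : ∀ e : E, π e = 0 ↔ ∃ x : I, ι x = e) :
    (∀ p q : I × I,
      (fun r : I × I => (ι r.1, ι r.2)) (lmul p q) =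
        lmul (ι p.1, ι p.2) (ι q.1, ι q.2)) ∧
    (∀ p q : E × E,
      (fun r : E × E => (π r.1, π r.2)) (lmul p q) =
        lmul (π p.1, π p.2) (π q.1, π q.2)) ∧
    Function.Injective (fun p : I × I => (ι p.1, ι p.2)) ∧
    Function.Surjective (fun p : E × E => (π p.1, π p.2)) ∧
    (∀ p : E × E, (π p.1, π p.2) = ((0 : H), (0 : H)) ↔
      ∃ q : I × I, (ι q.1, ι q.2) = p) := by

  refine ⟨?_, ?_, ?_, ?_, ?_⟩
  · intro p q
    simp only [lmul, hom_lam hι, hι.1, hι.2]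
  · intro p q
    simp only [lmul, hom_lam hπ, hπ.1, hπ.2]
  · intro p q h
    simp only [Prod.mk.injEq] at h
    exact Prod.ext (hinj h.1) (hinj h.2)
  · intro p
    obtain ⟨a, ha⟩ := hsurj p.1
    obtain ⟨b, hb⟩ := hsurj p.2
    exact ⟨(a, b), by simp [ha, hb]⟩
  · intro p
    constructor
    · intro h
      simp only [Prod.mk.injEq] at h
      obtain ⟨x, hx⟩ := (hker p.1).mp h.1
      obtain ⟨y, hy⟩ := (hker p.2).mp h.2
      exact ⟨(x, y), by simp [hx, hy]⟩
    · rintro ⟨⟨x, y⟩, rfl⟩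
      simp only [Prod.mk.injEq]
      exact ⟨(hker _).mpr ⟨x, rfl⟩, (hker _).mpr ⟨y, rfl⟩⟩
end

section
/- Let E be a skew left brace (of abelian type) with an ideal I such that I = I₁ × ⋯ × I_r (internal direct product in (E,+)) where each I_j is an ideal of E, and set I_k* = ∏_{j ≠ k} I_j. Then E splits over I (I admits a complement in E) if and only if E/I_k* splits over I/I_k* for every k = 1, …, r. -/
open SkewBrace
/-- `E/J` splits over `I/J` (for ideals `J ⊆ I` of `E`), expressed inside `E`:
there is a sub-skew brace `G ⊇ J` with `G + I = E` and `G ∩ I = J`. -/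
def SkewBrace.RelSplit {E : Type*} [SkewBrace E] (I J : Set E) : Prop :=
  ∃ G : Set E, IsSub G ∧ J ⊆ G ∧ (∀ e : E, ∃ g ∈ G, ∃ x ∈ I, e = g + x) ∧
    G ∩ I ⊆ J

section helpers

open SkewBrace
variable {E : Type*} [SkewBrace E]

lemma sb_lam_zero (a : E) : lam a 0 = 0 := by simp [lam, SkewBrace.circ_zero]
lemma sb_zero_lam (b : E) : lam 0 b = b := by simp [lam, SkewBrace.zero_circ]
lemma sb_circ_eq (a b : E) : circ a b = a + lam a b := by simp [lam, ← add_assoc]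
lemma sb_lam_add (a b c : E) : lam a (b + c) = lam a b + lam a c := by
  simp only [lam, SkewBrace.compat]; rw [add_assoc, add_assoc]
lemma sb_circ_add (a b c : E) : circ a (b + c) = circ a b + lam a c := by
  rw [SkewBrace.compat, lam, add_assoc]
lemma sb_circ_neg (a b : E) : circ a (-b) = a + -(circ a b) + a := by
  have h := SkewBrace.compat a b (-b)
  rw [add_neg_cancel, SkewBrace.circ_zero] at h
  have h2 : circ a (-b) = -(circ a b + -a) + a := by
    rw [eq_neg_add_iff_add_eq]; exact h.symm
  rw [h2, neg_add_rev, neg_neg]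
lemma sb_lam_lam (hcomm : ∀ a b : E, a + b = b + a) (a b y : E) :
    lam a (lam b y) = lam (circ a b) y := by
  letI : AddCommGroup E := { ‹SkewBrace E›.toAddGroup with add_comm := hcomm }
  simp only [lam, SkewBrace.compat, sb_circ_neg, SkewBrace.circ_assoc]
  abel
lemma sb_lam_cancel (hcomm : ∀ a b : E, a + b = b + a) (a y : E) :
    lam a (lam (sinv a) y) = y := by
  rw [sb_lam_lam hcomm, SkewBrace.circ_sinv, sb_zero_lam]
lemma sb_lam_cancel' (hcomm : ∀ a b : E, a + b = b + a) (a y : E) :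
    lam (sinv a) (lam a y) = y := by
  rw [sb_lam_lam hcomm, SkewBrace.sinv_circ, sb_zero_lam]
lemma sb_sinv_unique (a b : E) (h : circ a b = 0) : b = sinv a := by
  have := congrArg (fun t => circ (sinv a) t) h
  simpa [← SkewBrace.circ_assoc, SkewBrace.sinv_circ, SkewBrace.zero_circ,
    SkewBrace.circ_zero] using this
lemma sb_sinv_circ' (a b : E) : sinv (circ a b) = circ (sinv b) (sinv a) := by
  refine (sb_sinv_unique _ _ ?_).symm
  rw [SkewBrace.circ_assoc, ← SkewBrace.circ_assoc b, SkewBrace.circ_sinv,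
    SkewBrace.zero_circ, SkewBrace.circ_sinv]
lemma sb_sinv_eq (a : E) : sinv a = lam (sinv a) (-a) := by
  have h := SkewBrace.compat (sinv a) a (-a)
  rw [add_neg_cancel, SkewBrace.circ_zero, SkewBrace.sinv_circ, zero_add] at h
  -- h : sinv a = -(sinv a) + circ (sinv a) (-a)
  simp only [lam]; exact h

lemma sb_sinv_mem {S : Set E} (hneg : ∀ x ∈ S, -x ∈ S)
    (hlam : ∀ a : E, ∀ x ∈ S, lam a x ∈ S) {x : E} (hx : x ∈ S) : sinv x ∈ S := by
  rw [sb_sinv_eq]; exact hlam _ _ (hneg x hx)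

lemma sb_cong_r {S : Set E} (hlam : ∀ a : E, ∀ x ∈ S, lam a x ∈ S)
    (a b : E) {s : E} (hs : s ∈ S) : ∃ t ∈ S, circ a (b + s) = circ a b + t :=
  ⟨lam a s, hlam a s hs, sb_circ_add a b s⟩

lemma sb_cong_l (hcomm : ∀ a b : E, a + b = b + a) {S : Set E} (hS : IsIdeal S)
    (a b : E) {s : E} (hs : s ∈ S) : ∃ t ∈ S, circ (b + s) a = circ b a + t := by
  obtain ⟨-, -, hcn, hlam⟩ := hS
  set u := lam (sinv b) s with hu
  have hu' : u ∈ S := hlam _ _ hs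
  have h1 : b + s = circ b u := by rw [sb_circ_eq b u, hu, sb_lam_cancel hcomm]
  set w := circ (sinv a) (circ u a) with hw
  have hw' : w ∈ S := hcn _ _ hu'
  have h2 : circ u a = circ a w := by
    rw [hw, ← SkewBrace.circ_assoc, SkewBrace.circ_sinv, SkewBrace.zero_circ]
  refine ⟨lam (circ b a) w, hlam _ _ hw', ?_⟩
  rw [h1, SkewBrace.circ_assoc, h2, ← SkewBrace.circ_assoc, sb_circ_eq (circ b a) w]

lemma sb_sum_zero (n : ℕ) : (List.ofFn (fun _ : Fin n => (0:E))).sum = 0 := by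
  induction n with
  | zero => simp
  | succ n ih => rw [List.ofFn_succ, List.sum_cons]; simpa using ih

lemma sb_sum_hom (h : E → E) (h0 : h 0 = 0)
    (hadd : ∀ x y : E, h (x + y) = h x + h y) :
    ∀ (n : ℕ) (f : Fin n → E), h (List.ofFn f).sum = (List.ofFn fun j => h (f j)).sum := by
  intro n
  induction n with
  | zero => intro f; simpa using h0
  | succ n ih =>
    intro f
    rw [List.ofFn_succ, List.sum_cons, hadd, ih, List.ofFn_succ (f := fun j => h (f j)),
      List.sum_cons]

lemma sb_sum_add (hcomm : ∀ a b : E, a + b = b + a) :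
    ∀ (n : ℕ) (f g : Fin n → E),
      (List.ofFn fun j => f j + g j).sum = (List.ofFn f).sum + (List.ofFn g).sum := by
  letI : AddCommGroup E := { ‹SkewBrace E›.toAddGroup with add_comm := hcomm }
  intro n
  induction n with
  | zero => simp
  | succ n ih =>
    intro f g
    rw [List.ofFn_succ (f := fun j => f j + g j), List.sum_cons, ih,
      List.ofFn_succ (f := f), List.ofFn_succ (f := g), List.sum_cons, List.sum_cons]
    abel

lemma sb_sum_mem {S : Set E} (h0 : (0:E) ∈ S) (hadd : ∀ a ∈ S, ∀ b ∈ S, a + b ∈ S) :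
    ∀ (n : ℕ) (f : Fin n → E), (∀ j, f j ∈ S) → (List.ofFn f).sum ∈ S := by
  intro n
  induction n with
  | zero => intro f _; simpa using h0
  | succ n ih =>
    intro f hf
    rw [List.ofFn_succ, List.sum_cons]
    exact hadd _ (hf 0) _ (ih _ fun j => hf j.succ)

lemma sb_sum_update (hcomm : ∀ a b : E, a + b = b + a) :
    ∀ (n : ℕ) (f : Fin n → E) (k : Fin n),
      (List.ofFn f).sum = f k + (List.ofFn (Function.update f k 0)).sum := by
  letI : AddCommGroup E := { ‹SkewBrace E›.toAddGroup with add_comm := hcomm }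
  intro n
  induction n with
  | zero => intro f k; exact k.elim0
  | succ n ih =>
    intro f k
    induction k using Fin.cases with
    | zero =>
      rw [List.ofFn_succ, List.sum_cons, List.ofFn_succ (f := Function.update f 0 0),
        List.sum_cons]
      have h1 : Function.update f 0 (0:E) 0 = 0 := Function.update_self _ _ _
      have h2 : (fun i : Fin n => Function.update f 0 (0:E) i.succ) = fun i => f i.succ := by
        funext i; exact Function.update_of_ne (Fin.succ_ne_zero i) _ _
      rw [h1, h2, zero_add]
    | succ k =>
      rw [List.ofFn_succ, List.sum_cons, List.ofFn_succ (f := Function.update f k.succ 0),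
        List.sum_cons]
      have h1 : Function.update f k.succ (0:E) 0 = f 0 :=
        Function.update_of_ne (Fin.succ_ne_zero k).symm _ _
      have h2 : (fun i : Fin n => Function.update f k.succ (0:E) i.succ)
          = Function.update (fun i : Fin n => f i.succ) k 0 := by
        funext i
        by_cases hik : i = k
        · subst hik; simp [Function.update_self]
        · rw [Function.update_of_ne (fun h => hik (Fin.succ_injective _ h)) _ _,
            Function.update_of_ne hik]
      rw [h1, h2, ih (fun i => f i.succ) k]
      abel

lemma sb_cnorm_sum (hcomm : ∀ a b : E, a + b = b + a) :
    ∀ (n : ℕ) (S : Fin n → Set E), (∀ j, IsIdeal (S j)) → ∀ (a : E) (f : Fin n → E),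
      (∀ j, f j ∈ S j) →
      ∃ g : Fin n → E, (∀ j, g j ∈ S j) ∧ (∀ j, f j = 0 → g j = 0) ∧
        circ (sinv a) (circ (List.ofFn f).sum a) = (List.ofFn g).sum := by
  letI : AddCommGroup E := { ‹SkewBrace E›.toAddGroup with add_comm := hcomm }
  intro n
  induction n with
  | zero =>
    intro S hS a f hf
    refine ⟨fun _ => 0, fun j => j.elim0, fun j => j.elim0, ?_⟩
    simp [SkewBrace.zero_circ, SkewBrace.sinv_circ]
  | succ n ih =>
    intro S hS a f hf
    obtain ⟨g', hg'mem, hg'zero, hg'sum⟩ :=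
      ih (fun i => S i.succ) (fun i => hS i.succ) a (fun i => f i.succ)
        (fun i => hf i.succ)
    set y := (List.ofFn fun i : Fin n => f i.succ).sum with hy
    set cY := circ (sinv a) (circ y a) with hcY
    set c := circ (sinv a) (circ ((List.ofFn f).sum) a) with hc
    have hsum : (List.ofFn f).sum = f 0 + y := by rw [List.ofFn_succ, List.sum_cons]
    have hs0 : c - cY ∈ S 0 := by
      obtain ⟨t, ht, hteq⟩ := sb_cong_l hcomm (hS 0) a y (hf 0)
      have h1 : c = cY + lam (sinv a) t := by
        rw [hc, hsum, add_comm (f 0) y, hteq, sb_circ_add]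
      have h2 : c - cY = lam (sinv a) t := by rw [h1]; abel
      rw [h2]; exact (hS 0).2.2.2 _ _ ht
    have hs0z : f 0 = 0 → c - cY = 0 := by
      intro h0
      have : c = cY := by rw [hc, hcY, hsum, h0, zero_add]
      rw [this]; abel
    refine ⟨Fin.cons (c - cY) g', ?_, ?_, ?_⟩
    · intro j
      induction j using Fin.cases with
      | zero => simpa using hs0
      | succ i => simpa using hg'mem i
    · intro j
      induction j using Fin.cases with
      | zero => simpa using hs0z
      | succ i => simpa using hg'zero i
    · rw [List.ofFn_succ]
      simp only [Fin.cons_zero, Fin.cons_succ, List.sum_cons]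
      rw [← hg'sum]; abel

lemma sb_Jk_ideal (hcomm : ∀ a b : E, a + b = b + a) (r : ℕ) (Ij : Fin r → Set E)
    (hIj : ∀ j, IsIdeal (Ij j)) (k : Fin r) :
    IsIdeal {x : E | ∃ f : Fin r → E, (∀ j, f j ∈ Ij j) ∧ f k = 0 ∧
      x = (List.ofFn f).sum} := by
  letI : AddCommGroup E := { ‹SkewBrace E›.toAddGroup with add_comm := hcomm }
  set J : Set E := {x : E | ∃ f : Fin r → E, (∀ j, f j ∈ Ij j) ∧ f k = 0 ∧
      x = (List.ofFn f).sum} with hJ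
  have hlam : ∀ a : E, ∀ x ∈ J, lam a x ∈ J := by
    rintro a x ⟨f, hf, hfk, rfl⟩
    exact ⟨fun j => lam a (f j), fun j => (hIj j).2.2.2 a _ (hf j),
      by show lam a (f k) = 0; rw [hfk, sb_lam_zero], sb_sum_hom (lam a) (sb_lam_zero a) (sb_lam_add a) r f⟩
  have h0 : (0:E) ∈ J := ⟨fun _ => 0, fun j => (hIj j).1.1, rfl, (sb_sum_zero r).symm⟩
  have hadd : ∀ a ∈ J, ∀ b ∈ J, a + b ∈ J := by
    rintro a ⟨f, hf, hfk, rfl⟩ b ⟨f', hf', hf'k, rfl⟩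
    exact ⟨fun j => f j + f' j, fun j => (hIj j).1.2.1 _ (hf j) _ (hf' j),
      by show f k + f' k = 0; rw [hfk, hf'k, add_zero], (sb_sum_add hcomm r f f').symm⟩
  have hneg : ∀ a ∈ J, -a ∈ J := by
    rintro a ⟨f, hf, hfk, rfl⟩
    exact ⟨fun j => -(f j), fun j => (hIj j).1.2.2.1 _ (hf j),
      by show -(f k) = 0; rw [hfk, neg_zero], sb_sum_hom Neg.neg neg_zero (fun x y => neg_add x y) r f⟩
  refine ⟨⟨h0, hadd, hneg, ?_, ?_⟩, ?_, ?_, hlam⟩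
  · intro a ha b hb
    rw [sb_circ_eq]
    exact hadd _ ha _ (hlam a b hb)
  · intro a ha
    exact sb_sinv_mem hneg hlam ha
  · intro a x hx
    have : -a + x + a = x := by abel
    rw [this]; exact hx
  · rintro a x ⟨f, hf, hfk, rfl⟩
    obtain ⟨g, hg, hgz, hsum⟩ := sb_cnorm_sum hcomm r Ij hIj a f hf
    exact ⟨g, hg, hgz k hfk, hsum⟩
end helpers

/-- for a brace `E` (abelian additive group) with an ideal
`I = I₁ × ⋯ × I_r` (each `I_j` an ideal of `E`) and `I_k* = ∏_{j ≠ k} I_j`,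
`E` splits over `I` iff `E/I_k*` splits over `I/I_k*` for all `k`. -/
theorem stmt_16 {E : Type*} [SkewBrace E] (hcomm : ∀ a b : E, a + b = b + a)
    (r : ℕ) (I : Set E) (Ij : Fin r → Set E)
    (hI : IsIdeal I) (hIj : ∀ j, IsIdeal (Ij j))
    (hsub : ∀ j, Ij j ⊆ I)
    (hspan : ∀ x ∈ I, ∃ f : Fin r → E, (∀ j, f j ∈ Ij j) ∧ x = (List.ofFn f).sum)
    (huniq : ∀ f g : Fin r → E, (∀ j, f j ∈ Ij j) → (∀ j, g j ∈ Ij j) →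
      (List.ofFn f).sum = (List.ofFn g).sum → f = g) :
    SkewBrace.RelSplit I {0} ↔
      ∀ k : Fin r, SkewBrace.RelSplit I
        {x : E | ∃ f : Fin r → E, (∀ j, f j ∈ Ij j) ∧ f k = 0 ∧
          x = (List.ofFn f).sum} := by
  letI : AddCommGroup E := { ‹SkewBrace E›.toAddGroup with add_comm := hcomm }
  set Jk : Fin r → Set E := fun k =>
    {x : E | ∃ f : Fin r → E, (∀ j, f j ∈ Ij j) ∧ f k = 0 ∧
      x = (List.ofFn f).sum} with hJkdef
  have hJkideal : ∀ k, IsIdeal (Jk k) := fun k => sb_Jk_ideal hcomm r Ij hIj k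
  have hJkI : ∀ k, Jk k ⊆ I := by
    rintro k x ⟨f, hf, -, rfl⟩
    exact sb_sum_mem hI.1.1 hI.1.2.1 r f (fun j => hsub j (hf j))
  have hJk0 : ∀ k, (0:E) ∈ Jk k := fun k => (hJkideal k).1.1
  have hsingle : ∀ (m k : Fin r), k ≠ m → ∀ v ∈ Ij m, v ∈ Jk k := by
    intro m k hne v hv
    refine ⟨Function.update (fun _ => (0:E)) m v, ?_, ?_, ?_⟩
    · intro j
      by_cases hj : j = m
      · subst hj; simpa using hv
      · simpa [Function.update_of_ne hj] using (hIj j).1.1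
    · exact Function.update_of_ne hne _ _
    · have h1 := sb_sum_update hcomm r (Function.update (fun _ => (0:E)) m v) m
      have h2 : Function.update (Function.update (fun _ : Fin r => (0:E)) m v) m 0
          = fun _ => (0:E) := by
        funext j
        by_cases hj : j = m
        · subst hj; simp
        · simp [Function.update_of_ne hj]
      rw [h1, h2, sb_sum_zero, Function.update_self, add_zero]
  constructor
  · rintro ⟨G, ⟨hG0, hGadd, hGneg, hGcirc, hGsinv⟩, -, hGspan, hGint⟩ k
    refine ⟨{e | ∃ g ∈ G, ∃ x ∈ Jk k, e = g + x}, ⟨?_, ?_, ?_, ?_, ?_⟩, ?_, ?_, ?_⟩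
    · exact ⟨0, hG0, 0, hJk0 k, (add_zero 0).symm⟩
    · rintro a ⟨g, hg, x, hx, rfl⟩ b ⟨g', hg', x', hx', rfl⟩
      exact ⟨g + g', hGadd _ hg _ hg', x + x', (hJkideal k).1.2.1 _ hx _ hx', by abel⟩
    · rintro a ⟨g, hg, x, hx, rfl⟩
      exact ⟨-g, hGneg _ hg, -x, (hJkideal k).1.2.2.1 _ hx, by abel⟩
    · rintro a ⟨g, hg, x, hx, rfl⟩ b ⟨g', hg', x', hx', rfl⟩
      obtain ⟨t, ht, hteq⟩ := sb_cong_l hcomm (hJkideal k) g' g hx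
      refine ⟨circ g g', hGcirc _ hg _ hg', t + lam (g + x) x',
        (hJkideal k).1.2.1 _ ht _ ((hJkideal k).2.2.2 _ _ hx'), ?_⟩
      rw [sb_circ_add, hteq, add_assoc]
    · rintro a ⟨g, hg, x, hx, rfl⟩
      have h1 : circ (sinv g) (g + x) = lam (sinv g) x := by
        rw [sb_circ_add, SkewBrace.sinv_circ, zero_add]
      have ht : lam (sinv g) x ∈ Jk k := (hJkideal k).2.2.2 _ _ hx
      have h2 : circ g (lam (sinv g) x) = g + x := by
        rw [← h1, ← SkewBrace.circ_assoc, SkewBrace.circ_sinv, SkewBrace.zero_circ]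
      have h3 : sinv (g + x) = circ (sinv (lam (sinv g) x)) (sinv g) := by
        rw [← h2, sb_sinv_circ']
      have ht2 : sinv (lam (sinv g) x) ∈ Jk k := (hJkideal k).1.2.2.2.2 _ ht
      obtain ⟨u, hu, hueq⟩ := sb_cong_l hcomm (hJkideal k) (sinv g) 0 ht2
      rw [zero_add, SkewBrace.zero_circ] at hueq
      exact ⟨sinv g, hGsinv _ hg, u, hu, by rw [h3, hueq]⟩
    · intro x hx
      exact ⟨0, hG0, x, hx, (zero_add x).symm⟩
    · intro e
      obtain ⟨g, hg, x, hx, he⟩ := hGspan e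
      exact ⟨g, ⟨g, hg, 0, hJk0 k, (add_zero g).symm⟩, x, hx, he⟩
    · rintro e ⟨⟨g, hg, x, hx, rfl⟩, heI⟩
      have hxI : x ∈ I := hJkI k hx
      have hgI : g ∈ I := by
        have h : g = (g + x) + -x := by abel
        rw [h]
        exact hI.1.2.1 _ heI _ (hI.1.2.2.1 _ hxI)
      have hg0 : g = 0 := hGint ⟨hg, hgI⟩
      rw [hg0, zero_add]
      exact hx
  · intro h
    choose G hGsub hGsup hGspan hGint using h
    have key : ∀ m, m ≤ r → ∀ e : E, ∃ g x : E,
        (∀ k : Fin r, (k : ℕ) < m → g ∈ G k) ∧ x ∈ I ∧ e = g + x := by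
      intro m
      induction m with
      | zero =>
        intro _ e
        exact ⟨e, 0, fun k hk => absurd hk (Nat.not_lt_zero _), hI.1.1, (add_zero e).symm⟩
      | succ m ih =>
        intro hm e
        obtain ⟨g, x, hg, hx, he⟩ := ih (Nat.le_of_succ_le hm) e
        have hmr : m < r := hm
        obtain ⟨hh, hhmem, y, hy, hgy⟩ := hGspan ⟨m, hmr⟩ g
        obtain ⟨fy, hfy, hysum⟩ := hspan y hy
        refine ⟨g - fy ⟨m, hmr⟩, fy ⟨m, hmr⟩ + x, ?_, ?_, ?_⟩
        · intro k hk
          rcases Nat.lt_succ_iff_lt_or_eq.mp hk with hk' | hk'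
          · have hne : k ≠ ⟨m, hmr⟩ := by
              intro hkm
              rw [hkm] at hk'
              exact absurd hk' (lt_irrefl m)
            have hmem : fy ⟨m, hmr⟩ ∈ Jk k := hsingle ⟨m, hmr⟩ k hne _ (hfy ⟨m, hmr⟩)
            have h2 : -(fy ⟨m, hmr⟩) ∈ G k := (hGsub k).2.2.1 _ (hGsup k hmem)
            rw [sub_eq_add_neg]
            exact (hGsub k).2.1 _ (hg k hk') _ h2
          · have hkeq : k = ⟨m, hmr⟩ := Fin.ext hk'
            rw [hkeq]
            have hrest : y - fy ⟨m, hmr⟩ ∈ Jk ⟨m, hmr⟩ := by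
              refine ⟨Function.update fy ⟨m, hmr⟩ 0, ?_, Function.update_self _ _ _, ?_⟩
              · intro j
                by_cases hj : j = (⟨m, hmr⟩ : Fin r)
                · rw [hj, Function.update_self]; exact (hIj _).1.1
                · simpa [Function.update_of_ne hj] using hfy j
              · rw [hysum, sb_sum_update hcomm r fy ⟨m, hmr⟩]; abel
            have heq : g - fy ⟨m, hmr⟩ = hh + (y - fy ⟨m, hmr⟩) := by rw [hgy]; abel
            rw [heq]
            exact (hGsub _).2.1 _ hhmem _ (hGsup _ hrest)
        · exact hI.1.2.1 _ (hsub ⟨m, hmr⟩ (hfy ⟨m, hmr⟩)) _ hx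
        · rw [he]; abel
    refine ⟨{e | ∀ k, e ∈ G k}, ⟨?_, ?_, ?_, ?_, ?_⟩, ?_, ?_, ?_⟩
    · exact fun k => (hGsub k).1
    · exact fun a ha b hb k => (hGsub k).2.1 _ (ha k) _ (hb k)
    · exact fun a ha k => (hGsub k).2.2.1 _ (ha k)
    · exact fun a ha b hb k => (hGsub k).2.2.2.1 _ (ha k) _ (hb k)
    · exact fun a ha k => (hGsub k).2.2.2.2 _ (ha k)
    · intro x hx
      rw [Set.mem_singleton_iff] at hx
      subst hx
      exact fun k => (hGsub k).1
    · intro e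
      obtain ⟨g, x, hg, hx, he⟩ := key r le_rfl e
      exact ⟨g, fun k => hg k k.isLt, x, hx, he⟩
    · rintro e ⟨hgmem, heI⟩
      obtain ⟨f, hf, hesum⟩ := hspan e heI
      have hfk : ∀ k, f k = 0 := by
        intro k
        have hJ : e ∈ Jk k := hGint k ⟨hgmem k, heI⟩
        obtain ⟨f', hf', hf'k, hes'⟩ := hJ
        have heqf := huniq f f' hf hf' (by rw [← hesum, ← hes'])
        rw [heqf]
        exact hf'k
      have he0 : e = 0 := by
        have hfz : f = fun _ => (0:E) := funext hfk
        rw [hesum, hfz, sb_sum_zero]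
      exact he0
end

section
/- Let E be a skew left brace with an ideal I that is a trivial brace, equipped with a chain of ideals I = I₀ ⊵ I₁ ⊵ ⋯ ⊵ I_r = {0} of E. Suppose there exist sub-skew braces B₁, …, B_r of E with E = B₁ + I, B₁ ∩ I = I₁, and for each i = 1, …, r-1, B_i = B_{i+1} + I_i and B_{i+1} ∩ I_i = I_{i+1}. Then B_r is a complement of I in E: E = B_r + I and B_r ∩ I = {0}. -/
open SkewBrace
/-- given a chain of ideals `I = I₀ ⊵ I₁ ⊵ ⋯ ⊵ I_r = {0}` (with
`I` a trivial brace) and sub-skew braces `B₁, …, B_r` with `E = B₁ + I`,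
`B₁ ∩ I = I₁`, and `B_i = B_{i+1} + I_i`, `B_{i+1} ∩ I_i = I_{i+1}` for
`1 ≤ i ≤ r-1`, the sub-skew brace `B_r` is a complement of `I` in `E`. -/
theorem stmt_18 {E : Type*} [SkewBrace E] (r : ℕ) (hr : 1 ≤ r)
    (Iseq : ℕ → Set E) (hIdeal : ∀ i, i ≤ r → IsIdeal (Iseq i))
    (htriv : ∀ x ∈ Iseq 0, ∀ y ∈ Iseq 0, SkewBrace.circ x y = x + y)
    (hchain : ∀ i, i < r → Iseq (i + 1) ⊆ Iseq i)
    (hbot : Iseq r = {0})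
    (B : ℕ → Set E) (hB : ∀ i, 1 ≤ i → i ≤ r → IsSub (B i))
    (h1 : ∀ e : E, ∃ b ∈ B 1, ∃ x ∈ Iseq 0, e = b + x)
    (h1' : B 1 ∩ Iseq 0 = Iseq 1)
    (hstep : ∀ i, 1 ≤ i → i ≤ r - 1 →
      B i = {z : E | ∃ b ∈ B (i + 1), ∃ x ∈ Iseq i, z = b + x} ∧
      B (i + 1) ∩ Iseq i = Iseq (i + 1)) :
    (∀ e : E, ∃ b ∈ B r, ∃ x ∈ Iseq 0, e = b + x) ∧
    B r ∩ Iseq 0 = {0} := by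
  have hsub : ∀ i, i ≤ r → Iseq i ⊆ Iseq 0 := by
    intro i
    induction i with
    | zero => intro _; exact subset_rfl
    | succ n ih => intro h; exact (hchain n (by omega)).trans (ih (by omega))
  have key : ∀ i, 1 ≤ i → i ≤ r →
      (∀ e : E, ∃ b ∈ B i, ∃ x ∈ Iseq 0, e = b + x) ∧ B i ∩ Iseq 0 = Iseq i := by
    intro i
    induction i with
    | zero => omega
    | succ n ih =>
      intro h1n hle
      rcases Nat.eq_zero_or_pos n with rfl | hn1
      · exact ⟨h1, h1'⟩
      · obtain ⟨ihsum, ihint⟩ := ih hn1 (by omega)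
        obtain ⟨hdec, hint⟩ := hstep n hn1 (by omega)
        constructor
        · intro e
          obtain ⟨b, hb, x, hx, rfl⟩ := ihsum e
          rw [hdec] at hb
          obtain ⟨b', hb', y, hy, rfl⟩ := hb
          exact ⟨b', hb', y + x,
            (hIdeal 0 (by omega)).1.2.1 y (hsub n (by omega) hy) x hx, by rw [add_assoc]⟩
        · apply Set.Subset.antisymm
          · rintro z ⟨hz1, hz2⟩
            have hzBn : z ∈ B n := by
              rw [hdec]; exact ⟨z, hz1, 0, (hIdeal n (by omega)).1.1, by simp⟩
            have hzn : z ∈ Iseq n := by rw [← ihint]; exact ⟨hzBn, hz2⟩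
            rw [← hint]; exact ⟨hz1, hzn⟩
          · intro z hz
            rw [← hint] at hz
            exact ⟨hz.1, hsub n (by omega) hz.2⟩
  obtain ⟨hs, hi⟩ := key r hr le_rfl
  exact ⟨hs, by rw [hi, hbot]⟩
end
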